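/- arXiv:1401.1944 — 2 statements merged into one kernel-verified Lean document; each statement's English description precedes it below -/
import Mathlib

section
/- Let α > 2, λ > 0, θ > 0, let M ≥ 1 and M_max ≥ 1 be integers, and let p(1), …, p(M_max) be nonnegative reals with ∑_{m̃=1}^{M_max} p(m̃) ≤ 1. Define ρ := ∑_{m̃=1}^{M_max} p(m̃) · θ^{2/α} ∫_{θ^{−2/α}}^∞ (1 − (1 + u^{−α/2}·M/m̃)^{−m̃}) du. Then ∫_0^∞ 2πλ r · exp(−πλ r²) · exp(−2πλ ∑_{m̃=1}^{M_max} p(m̃) ∫_r^∞ (1 − (1 + θ·(r/u)^α·M/m̃)^{−m̃}) u du) dr = 1/(1 + ρ); consequently the SIR outage probability F_SIR(θ | M), obtained by averaging 1 − L_I(θ M r^α) over the Rayleigh-distributed nearest-access-point distance with density 2πλ r e^{−πλ r²}, equals 1 − 1/(1 + ρ). -/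
open Real MeasureTheory

open Set Filter

lemma inner_subst (α θ : ℝ) (hα : 2 < α) (hθ : 0 < θ) (M m : ℕ) (hm : 1 ≤ m)
    (r : ℝ) (hr : 0 < r) :
    ∫ u in Set.Ioi r, (1 - (1 + θ * (r / u) ^ α * (M : ℝ) / (m : ℝ)) ^ (-(m : ℝ))) * u
      = r ^ 2 / 2 * (θ ^ (2 / α) *
          ∫ u in Set.Ioi (θ ^ (-2 / α)),
            (1 - (1 + u ^ (-α / 2) * (M : ℝ) / (m : ℝ)) ^ (-(m : ℝ)))) := by
  have hα0 : (0:ℝ) < α := by linarith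
  have hαne : α ≠ 0 := ne_of_gt hα0
  set c : ℝ := r * θ ^ (1/α) with hc_def
  have hc : 0 < c := mul_pos hr (Real.rpow_pos_of_pos hθ _)
  set b : ℝ := θ ^ (-2/α) with hb_def
  have hb : 0 < b := Real.rpow_pos_of_pos hθ _
  set φ : ℝ → ℝ := fun v => c * v ^ (1/2 : ℝ) with hφ_def
  set φ' : ℝ → ℝ := fun v => c * ((1/2 : ℝ) * v ^ ((1/2 : ℝ) - 1)) with hφ'_def
  have hbhalf : b ^ (1/2 : ℝ) = θ ^ (-1/α) := by
    rw [hb_def, ← Real.rpow_mul hθ.le, show (-2/α * (1/2:ℝ)) = -1/α by ring]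
  have hcb : c * b ^ (1/2 : ℝ) = r := by
    rw [hbhalf, hc_def, mul_assoc, ← Real.rpow_add hθ,
      show (1/α + -1/α : ℝ) = 0 by ring, Real.rpow_zero, mul_one]
  have himg : φ '' Set.Ioi b = Set.Ioi r := by
    ext y
    constructor
    · rintro ⟨v, hv, rfl⟩
      have hv' : b < v := hv
      have : b ^ (1/2:ℝ) < v ^ (1/2:ℝ) :=
        Real.rpow_lt_rpow hb.le hv' (by norm_num)
      have h2 := mul_lt_mul_of_pos_left this hc
      rw [hcb] at h2
      exact h2
    · intro hy
      have hy' : r < y := hy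
      have hy0 : 0 < y := hr.trans hy'
      refine ⟨(y / c) ^ (2:ℝ), ?_, ?_⟩
      · have h1 : b ^ (1/2:ℝ) < y / c := by
          rw [lt_div_iff₀ hc, mul_comm]
          rw [← hcb] at hy'
          exact hy'
        have := Real.rpow_lt_rpow (Real.rpow_nonneg hb.le _) h1 (by norm_num : (0:ℝ) < 2)
        rwa [← Real.rpow_mul hb.le, one_div, inv_mul_cancel₀ (two_ne_zero), Real.rpow_one] at this
      · have hyc : 0 ≤ y / c := (div_pos hy0 hc).le
        show c * ((y / c) ^ (2:ℝ)) ^ (1/2:ℝ) = y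
        rw [← Real.rpow_mul hyc]
        norm_num
        field_simp
  have hderiv : ∀ v ∈ Set.Ioi b, HasDerivWithinAt φ (φ' v) (Set.Ioi b) v := by
    intro v hv
    have hv0 : (0:ℝ) < v := hb.trans hv
    exact ((Real.hasDerivAt_rpow_const (Or.inl hv0.ne')).const_mul c).hasDerivWithinAt
  have hinj : Set.InjOn φ (Set.Ioi b) := by
    have : StrictMonoOn φ (Set.Ioi b) := by
      intro v hv w hw hvw
      exact mul_lt_mul_of_pos_left
        (Real.rpow_lt_rpow (hb.le.trans (le_of_lt hv)) hvw (by norm_num)) hc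
    exact this.injOn
  rw [← himg, integral_image_eq_integral_abs_deriv_smul measurableSet_Ioi hderiv hinj]
  have key : ∀ v ∈ Set.Ioi b,
      |φ' v| • ((1 - (1 + θ * (r / φ v) ^ α * (M : ℝ) / (m : ℝ)) ^ (-(m : ℝ))) * φ v)
        = (r ^ 2 / 2 * θ ^ (2/α)) *
            (1 - (1 + v ^ (-α / 2) * (M : ℝ) / (m : ℝ)) ^ (-(m : ℝ))) := by
    intro v hv
    have hv0 : (0:ℝ) < v := hb.trans hv
    have hφv : 0 < φ v := mul_pos hc (Real.rpow_pos_of_pos hv0 _)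
    have hφ'pos : 0 < φ' v := by
      have : (0:ℝ) < v ^ ((1/2:ℝ) - 1) := Real.rpow_pos_of_pos hv0 _
      positivity
    have hbase : θ * (r / φ v) ^ α = v ^ (-α/2) := by
      have hw : (0:ℝ) < θ ^ (1/α) * v ^ (1/2:ℝ) :=
        mul_pos (Real.rpow_pos_of_pos hθ _) (Real.rpow_pos_of_pos hv0 _)
      have h1 : r / φ v = (θ ^ (1/α) * v ^ (1/2:ℝ))⁻¹ := by
        rw [hφ_def]
        simp only [hc_def]
        field_simp
      rw [h1, Real.inv_rpow hw.le, Real.mul_rpow (Real.rpow_nonneg hθ.le _)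
        (Real.rpow_nonneg hv0.le _), ← Real.rpow_mul hθ.le, ← Real.rpow_mul hv0.le]
      rw [one_div, inv_mul_cancel₀ hαne, Real.rpow_one]
      rw [mul_inv, ← mul_assoc, mul_inv_cancel₀ hθ.ne', one_mul]
      rw [← Real.rpow_neg hv0.le]
      ring_nf
    have hmag : |φ' v| * φ v = r ^ 2 / 2 * θ ^ (2/α) := by
      rw [abs_of_pos hφ'pos, hφ'_def, hφ_def]
      have : v ^ ((1/2:ℝ) - 1) * v ^ (1/2:ℝ) = 1 := by
        rw [← Real.rpow_add hv0]
        norm_num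
      have hc2 : c * c = r ^ 2 * θ ^ (2/α) := by
        rw [hc_def]
        have : θ ^ (1/α) * θ ^ (1/α) = θ ^ (2/α) := by
          rw [← Real.rpow_add hθ]; ring_nf
        calc r * θ ^ (1/α) * (r * θ ^ (1/α)) = r ^ 2 * (θ ^ (1/α) * θ ^ (1/α)) := by ring
        _ = r ^ 2 * θ ^ (2/α) := by rw [this]
      calc c * (1/2 * v ^ ((1/2:ℝ) - 1)) * (c * v ^ (1/2:ℝ))
          = c * c * (v ^ ((1/2:ℝ) - 1) * v ^ (1/2:ℝ)) / 2 := by ring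
        _ = r ^ 2 * θ ^ (2/α) * 1 / 2 := by rw [this, hc2]
        _ = r ^ 2 / 2 * θ ^ (2/α) := by ring
    rw [smul_eq_mul, hbase]
    calc |φ' v| * ((1 - (1 + v ^ (-α/2) * (M:ℝ) / (m:ℝ)) ^ (-(m:ℝ))) * φ v)
        = |φ' v| * φ v * (1 - (1 + v ^ (-α/2) * (M:ℝ) / (m:ℝ)) ^ (-(m:ℝ))) := by ring
      _ = _ := by rw [hmag]
  rw [setIntegral_congr_fun measurableSet_Ioi key, integral_const_mul, mul_assoc]

lemma K_nonneg (α θ : ℝ) (hθ : 0 < θ) (M m : ℕ) :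
    0 ≤ ∫ u in Set.Ioi (θ ^ (-2 / α)),
          (1 - (1 + u ^ (-α / 2) * (M : ℝ) / (m : ℝ)) ^ (-(m : ℝ))) := by
  refine setIntegral_nonneg measurableSet_Ioi (fun u hu => ?_)
  have hu0 : 0 < u := (Real.rpow_pos_of_pos hθ _).trans hu
  have h1 : (1:ℝ) ≤ 1 + u ^ (-α / 2) * (M : ℝ) / (m : ℝ) := by
    have : 0 ≤ u ^ (-α / 2) * (M : ℝ) / (m : ℝ) := by positivity
    linarith
  have h2 := Real.rpow_le_one_of_one_le_of_nonpos h1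
    (neg_nonpos.mpr (Nat.cast_nonneg m))
  linarith

lemma gauss_int (c : ℝ) (hc : 0 < c) :
    ∫ r in Set.Ioi (0:ℝ), r * Real.exp (-(c * r ^ 2)) = 1 / (2 * c) := by
  have hderiv : ∀ x ∈ Set.Ici (0:ℝ),
      HasDerivAt (fun x : ℝ => -(1/(2*c)) * Real.exp (-(c * x ^ 2)))
        (x * Real.exp (-(c * x ^ 2))) x := by
    intro x _
    have h1 : HasDerivAt (fun x : ℝ => -(c * x ^ 2)) (-(c * (2 * x))) x := by
      exact (((hasDerivAt_pow 2 x).const_mul c).neg).congr_deriv (by norm_num)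
    have := (h1.exp).const_mul (-(1/(2*c)))
    refine this.congr_deriv ?_
    field_simp
  have hint : IntegrableOn (fun r : ℝ => r * Real.exp (-(c * r ^ 2))) (Set.Ioi 0) := by
    have := (integrable_mul_exp_neg_mul_sq hc).integrableOn (s := Set.Ioi (0:ℝ))
    simpa [neg_mul] using this
  have htend : Tendsto (fun x : ℝ => -(1/(2*c)) * Real.exp (-(c * x ^ 2))) atTop (nhds 0) := by
    have h1 : Tendsto (fun x : ℝ => -(c * x ^ 2)) atTop atBot := by
      apply Filter.tendsto_neg_atBot_iff.mpr
      exact (tendsto_pow_atTop (two_ne_zero)).const_mul_atTop hc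
    have := (Real.tendsto_exp_atBot).comp h1
    have h2 := this.const_mul (-(1/(2*c)))
    simpa using h2
  have := integral_Ioi_of_hasDerivAt_of_tendsto' hderiv hint htend
  rw [this]
  norm_num

/-- Proposition 1 (eqs. (4)–(6)): averaging the conditional Laplace transform of the
interference `L_I(θ M r^α)` over the Rayleigh-distributed nearest-AP distance
(density `2πλ r e^{−πλr²}`) gives `1/(1 + ρ)`, where
`ρ = ∑_{m̃=1}^{M_max} p(m̃) θ^{2/α} ∫_{θ^{−2/α}}^∞ (1 − (1 + u^{−α/2} M/m̃)^{−m̃}) du`;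
hence the SIR outage probability `F_SIR(θ | M)` equals `1 − 1/(1 + ρ)`. -/
theorem sir_ccdf_integral (α lam θ : ℝ) (hα : 2 < α) (hlam : 0 < lam) (hθ : 0 < θ)
    (M Mmax : ℕ) (hM : 1 ≤ M) (hMmax : 1 ≤ Mmax)
    (p : ℕ → ℝ) (hp : ∀ m, 0 ≤ p m) (hpsum : ∑ m ∈ Finset.Icc 1 Mmax, p m ≤ 1) :
    ∫ r in Set.Ioi (0 : ℝ),
        2 * π * lam * r * Real.exp (-(π * lam * r ^ 2)) *
          Real.exp (-(2 * π * lam *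
            ∑ m ∈ Finset.Icc 1 Mmax, p m *
              ∫ u in Set.Ioi r,
                (1 - (1 + θ * (r / u) ^ α * (M : ℝ) / (m : ℝ)) ^ (-(m : ℝ))) * u))
      = 1 / (1 + ∑ m ∈ Finset.Icc 1 Mmax, p m * (θ ^ (2 / α) *
          ∫ u in Set.Ioi (θ ^ (-2 / α)),
            (1 - (1 + u ^ (-α / 2) * (M : ℝ) / (m : ℝ)) ^ (-(m : ℝ))))) := by
  set ρ : ℝ := ∑ m ∈ Finset.Icc 1 Mmax, p m * (θ ^ (2 / α) *
      ∫ u in Set.Ioi (θ ^ (-2 / α)),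
        (1 - (1 + u ^ (-α / 2) * (M : ℝ) / (m : ℝ)) ^ (-(m : ℝ)))) with hρ_def
  have hρ : 0 ≤ ρ := by
    apply Finset.sum_nonneg
    intro m _
    exact mul_nonneg (hp m) (mul_nonneg (Real.rpow_nonneg hθ.le _) (K_nonneg α θ hθ M m))
  have hc : 0 < π * lam * (1 + ρ) := by positivity
  have heq : ∀ r ∈ Set.Ioi (0:ℝ),
      2 * π * lam * r * Real.exp (-(π * lam * r ^ 2)) *
          Real.exp (-(2 * π * lam *
            ∑ m ∈ Finset.Icc 1 Mmax, p m *
              ∫ u in Set.Ioi r,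
                (1 - (1 + θ * (r / u) ^ α * (M : ℝ) / (m : ℝ)) ^ (-(m : ℝ))) * u))
        = (2 * π * lam) * (r * Real.exp (-(π * lam * (1 + ρ) * r ^ 2))) := by
    intro r hr
    have hr0 : (0:ℝ) < r := hr
    have hsum : ∑ m ∈ Finset.Icc 1 Mmax, p m *
        ∫ u in Set.Ioi r,
          (1 - (1 + θ * (r / u) ^ α * (M : ℝ) / (m : ℝ)) ^ (-(m : ℝ))) * u
        = r ^ 2 / 2 * ρ := by
      rw [hρ_def, Finset.mul_sum]
      refine Finset.sum_congr rfl (fun m hm => ?_)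
      rw [inner_subst α θ hα hθ M m (Finset.mem_Icc.mp hm).1 r hr0]
      ring
    rw [hsum, mul_assoc, ← Real.exp_add,
      show -(π * lam * r ^ 2) + -(2 * π * lam * (r ^ 2 / 2 * ρ))
        = -(π * lam * (1 + ρ) * r ^ 2) by ring]
    ring
  rw [setIntegral_congr_fun measurableSet_Ioi heq, integral_const_mul,
    gauss_int _ hc]
  rw [mul_one_div, div_eq_div_iff (by positivity) (by positivity)]
  ring
end

section
/- For all reals α > 2, θ > 0, y > 0 and z > 0, the substitution w = θ^{2/α} u gives θ^{2/α} ∫_{θ^{−2/α}}^∞ (1 − (1 + u^{−α/2}·y/z)^{−z}) du = ∫_1^∞ (1 − (1 + θ·w^{−α/2}·y/z)^{−z}) dw; consequently, for fixed α, y, z the map θ ↦ θ^{2/α} ∫_{θ^{−2/α}}^∞ (1 − (1 + u^{−α/2}·y/z)^{−z}) du is strictly increasing on (0, ∞). -/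
open MeasureTheory Set Real

private lemma aux_bound {t z : ℝ} (ht : 0 ≤ t) (hz : 0 < z) :
    1 - (1 + t) ^ (-z) ≤ z * t := by
  have h1 : (0:ℝ) < 1 + t := by linarith
  rw [Real.rpow_def_of_pos h1]
  have h2 : Real.log (1 + t) * (-z) + 1 ≤ Real.exp (Real.log (1 + t) * (-z)) :=
    Real.add_one_le_exp _
  have h3 : Real.log (1 + t) ≤ t := by
    have := Real.log_le_sub_one_of_pos h1; linarith
  have h4 : 0 ≤ Real.log (1 + t) := Real.log_nonneg (by linarith)
  nlinarith

private lemma aux_nonneg {t z : ℝ} (ht : 0 ≤ t) (hz : 0 < z) :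
    0 ≤ 1 - (1 + t) ^ (-z) := by
  have : (1 + t) ^ (-z) ≤ 1 :=
    Real.rpow_le_one_of_one_le_of_nonpos (by linarith) (by linarith)
  linarith

private lemma aux_integrable (α y z θ : ℝ) (hα : 2 < α) (hy : 0 < y) (hz : 0 < z)
    (hθ : 0 < θ) :
    IntegrableOn (fun w : ℝ => 1 - (1 + θ * w ^ (-α / 2) * y / z) ^ (-z)) (Ioi 1) := by
  have hg : IntegrableOn (fun w : ℝ => θ * y * w ^ (-α / 2)) (Ioi 1) :=
    (integrableOn_Ioi_rpow_of_lt (by linarith [hα] : -α / 2 < -1) one_pos).const_mul (θ * y)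
  have hmeas : AEStronglyMeasurable
      (fun w : ℝ => 1 - (1 + θ * w ^ (-α / 2) * y / z) ^ (-z))
      (volume.restrict (Ioi 1)) := by
    apply ContinuousOn.aestronglyMeasurable _ measurableSet_Ioi
    apply continuousOn_const.sub
    have hcr : ContinuousOn (fun x : ℝ => x ^ (-α / 2)) (Ioi 1) :=
      (continuous_id.continuousOn : ContinuousOn (fun x : ℝ => x) (Ioi 1)).rpow_const
        (fun x hx => Or.inl (ne_of_gt (lt_trans one_pos hx)))
    apply ContinuousOn.rpow_const
    · exact continuousOn_const.add (((hcr.const_smul θ).mul continuousOn_const).div_const z)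
    · intro x hx
      left
      have hx0 : (0:ℝ) < x := lt_trans one_pos hx
      have : 0 < θ * x ^ (-α / 2) * y / z :=
        div_pos (mul_pos (mul_pos hθ (Real.rpow_pos_of_pos hx0 _)) hy) hz
      positivity
  refine hg.integrable.mono hmeas ?_
  rw [ae_restrict_iff' measurableSet_Ioi]
  filter_upwards with w hw
  have hw0 : (0:ℝ) < w := lt_trans one_pos hw
  have hrp : 0 < w ^ (-α / 2) := Real.rpow_pos_of_pos hw0 _
  have ht : 0 ≤ θ * w ^ (-α / 2) * y / z :=
    (div_pos (mul_pos (mul_pos hθ hrp) hy) hz).le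
  rw [Real.norm_eq_abs, Real.norm_eq_abs,
    abs_of_nonneg (aux_nonneg ht hz),
    abs_of_nonneg (by positivity : (0:ℝ) ≤ θ * y * w ^ (-α / 2))]
  calc 1 - (1 + θ * w ^ (-α / 2) * y / z) ^ (-z)
      ≤ z * (θ * w ^ (-α / 2) * y / z) := aux_bound ht hz
    _ = θ * y * w ^ (-α / 2) := by field_simp

/-- For `α > 2`, `y, z > 0`, the substitution `w = θ^{2/α} u` gives
`θ^{2/α} ∫_{θ^{−2/α}}^∞ (1 − (1 + u^{−α/2} y/z)^{−z}) du
  = ∫_1^∞ (1 − (1 + θ w^{−α/2} y/z)^{−z}) dw`,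
and consequently `θ ↦ θ^{2/α} ∫_{θ^{−2/α}}^∞ (1 − (1 + u^{−α/2} y/z)^{−z}) du`
is strictly increasing on `(0, ∞)`. -/
theorem rho_substitution_and_monotone (α y z : ℝ) (hα : 2 < α) (hy : 0 < y) (hz : 0 < z) :
    (∀ θ : ℝ, 0 < θ →
        θ ^ (2 / α) * ∫ u in Set.Ioi (θ ^ (-2 / α)),
            (1 - (1 + u ^ (-α / 2) * y / z) ^ (-z))
          = ∫ w in Set.Ioi (1 : ℝ), (1 - (1 + θ * w ^ (-α / 2) * y / z) ^ (-z))) ∧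
      StrictMonoOn
        (fun θ : ℝ => θ ^ (2 / α) * ∫ u in Set.Ioi (θ ^ (-2 / α)),
          (1 - (1 + u ^ (-α / 2) * y / z) ^ (-z)))
        (Set.Ioi (0 : ℝ)) := by
  have hα0 : α ≠ 0 := by positivity
  have key : ∀ θ : ℝ, 0 < θ →
      θ ^ (2 / α) * ∫ u in Set.Ioi (θ ^ (-2 / α)),
          (1 - (1 + u ^ (-α / 2) * y / z) ^ (-z))
        = ∫ w in Set.Ioi (1 : ℝ), (1 - (1 + θ * w ^ (-α / 2) * y / z) ^ (-z)) := by
    intro θ hθ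
    set b : ℝ := θ ^ (-2 / α) with hbdef
    have hb : 0 < b := Real.rpow_pos_of_pos hθ _
    have hinv : b⁻¹ = θ ^ (2 / α) := by
      rw [hbdef, neg_div, Real.rpow_neg hθ.le, inv_inv]
    have hcomp := integral_comp_mul_left_Ioi
      (fun u : ℝ => 1 - (1 + u ^ (-α / 2) * y / z) ^ (-z)) 1 hb
    rw [mul_one] at hcomp
    have hcong : ∫ w in Set.Ioi (1 : ℝ), (1 - (1 + θ * w ^ (-α / 2) * y / z) ^ (-z))
        = ∫ w in Set.Ioi (1 : ℝ), (1 - (1 + (b * w) ^ (-α / 2) * y / z) ^ (-z)) := by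
      apply setIntegral_congr_fun measurableSet_Ioi
      intro w hw
      have hw0 : (0:ℝ) < w := lt_trans one_pos hw
      have : (b * w) ^ (-α / 2) = θ * w ^ (-α / 2) := by
        rw [Real.mul_rpow hb.le hw0.le, hbdef, ← Real.rpow_mul hθ.le,
          show -2 / α * (-α / 2) = 1 by field_simp, Real.rpow_one]
      dsimp only
      rw [this]
    rw [hcong, hcomp, smul_eq_mul, hinv]
  refine ⟨key, ?_⟩
  intro θ1 h1 θ2 h2 hlt
  simp only [Set.mem_Ioi] at h1 h2
  simp only [key θ1 h1, key θ2 h2]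
  have hi1 := aux_integrable α y z θ1 hα hy hz h1
  have hi2 := aux_integrable α y z θ2 hα hy hz h2
  rw [← sub_pos, ← integral_sub hi2 hi1]
  have hpos : ∀ w ∈ Set.Ioi (1:ℝ),
      0 < (1 - (1 + θ2 * w ^ (-α / 2) * y / z) ^ (-z))
        - (1 - (1 + θ1 * w ^ (-α / 2) * y / z) ^ (-z)) := by
    intro w hw
    have hw0 : (0:ℝ) < w := lt_trans one_pos hw
    have hrp : 0 < w ^ (-α / 2) := Real.rpow_pos_of_pos hw0 _
    have ht1 : 0 < θ1 * w ^ (-α / 2) * y / z :=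
      div_pos (mul_pos (mul_pos h1 hrp) hy) hz
    have htlt : θ1 * w ^ (-α / 2) * y / z < θ2 * w ^ (-α / 2) * y / z := by
      gcongr
    have h1' : (0:ℝ) < 1 + θ1 * w ^ (-α / 2) * y / z := by linarith
    have h2' : 1 + θ1 * w ^ (-α / 2) * y / z < 1 + θ2 * w ^ (-α / 2) * y / z := by linarith
    have := Real.rpow_lt_rpow_of_neg h1' h2' (neg_lt_zero.mpr hz)
    linarith
  rw [setIntegral_pos_iff_support_of_nonneg_ae]
  · refine lt_of_lt_of_le ?_ (measure_mono (Set.subset_inter (fun w hw => ?_) Set.Subset.rfl))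
    · rw [Real.volume_Ioi]; exact ENNReal.zero_lt_top
    · exact (hpos w hw).ne'
  · exact (ae_restrict_iff' measurableSet_Ioi).mpr
      (Filter.Eventually.of_forall fun w hw => (hpos w hw).le)
  · exact hi2.sub hi1
end
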